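/- arXiv:1809.07240 — 7 statements merged into one kernel-verified Lean document; each statement's English description precedes it below -/
import Mathlib

section
/- For n ≥ 6, the complement of the cycle graph C_n is a pawful graph but is not a join of two nonempty graphs. -/
/-- The cycle graph on `ZMod n`, with `i` adjacent to `i + 1`. -/
def cycleGraph (n : ℕ) : SimpleGraph (ZMod n) where
  Adj u v := u ≠ v ∧ (u - v = 1 ∨ v - u = 1)
  symm := ⟨fun u v h => ⟨h.1.symm, h.2.symm⟩⟩
  loopless := ⟨fun u h => h.1 rfl⟩

/-- A pawful graph: connected, diameter at most 2, and any "paw" configuration can be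
completed. -/
def Pawful {V : Type*} (G : SimpleGraph V) : Prop :=
  G.Connected ∧ (∀ u v : V, G.dist u v ≤ 2) ∧
    ∀ u v w : V, G.dist u v = 2 → G.dist v w = 2 → G.dist u w = 1 →
      ∃ x : V, G.dist x u = 1 ∧ G.dist x v = 1 ∧ G.dist x w = 1

/-!
In the complement of `C_n`, the only non-neighbours of `v` are `v - 1`, `v` and `v + 1`, and for
`n ≥ 6` all three are adjacent to `v + 3`, since they differ from it by `4`, `3`, `2`, none of which
is `0` or `±1` modulo `n`. So `v + 3` is a common neighbour of `v` and any non-neighbour of `v`,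
which gives diameter at most `2` and, for a paw `u, v, w`, a vertex adjacent to all three.
Not a join: `z` and `z + 1` are never adjacent in the complement, so a side of a join is closed
under `z ↦ z + 1`, hence is everything.
-/

namespace SimpleGraph

variable {V : Type*} {G : SimpleGraph V}

theorem exists_walk_length_le_two_of_exists_common_adj
    (h : ∀ u v, u ≠ v → ¬ G.Adj u v → ∃ x, G.Adj u x ∧ G.Adj x v) (u v : V) :
    ∃ p : G.Walk u v, p.length ≤ 2 := by
  by_cases huv : u = v
  · subst huv
    exact ⟨.nil, by simp⟩
  by_cases hadj : G.Adj u v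
  · exact ⟨.cons hadj .nil, by simp⟩
  obtain ⟨x, hux, hxv⟩ := h u v huv hadj
  exact ⟨.cons hux (.cons hxv .nil), by simp⟩

theorem connected_of_exists_common_adj [Nonempty V]
    (h : ∀ u v, u ≠ v → ¬ G.Adj u v → ∃ x, G.Adj u x ∧ G.Adj x v) : G.Connected :=
  (connected_iff G).2
    ⟨fun u v => ⟨(exists_walk_length_le_two_of_exists_common_adj h u v).choose⟩, inferInstance⟩

theorem dist_le_two_of_exists_common_adj
    (h : ∀ u v, u ≠ v → ¬ G.Adj u v → ∃ x, G.Adj u x ∧ G.Adj x v) (u v : V) :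
    G.dist u v ≤ 2 := by
  obtain ⟨p, hp⟩ := exists_walk_length_le_two_of_exists_common_adj h u v
  exact (dist_le p).trans hp

theorem not_adj_of_dist_eq_two {u v : V} (h : G.dist u v = 2) : ¬ G.Adj u v := by
  rw [← dist_eq_one_iff_adj, h]
  decide

end SimpleGraph

theorem ZMod.eq_univ_of_add_one_mem {n : ℕ} [NeZero n] {A : Set (ZMod n)} {a : ZMod n}
    (ha : a ∈ A) (hA : ∀ z ∈ A, z + 1 ∈ A) : A = Set.univ := by
  have hk : ∀ k : ℕ, a + k ∈ A := by
    intro k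
    induction k with
    | zero => simpa using ha
    | succ k ih => simpa [add_assoc] using hA _ ih
  refine Set.eq_univ_of_forall fun b => ?_
  obtain ⟨k, hba⟩ := ZMod.natCast_zmod_surjective (b - a)
  simpa [hba] using hk k

namespace cycleGraph

variable {n : ℕ}

theorem compl_adj_iff {u v : ZMod n} :
    (cycleGraph n)ᶜ.Adj u v ↔ u ≠ v ∧ u - v ≠ 1 ∧ v - u ≠ 1 := by
  simp only [SimpleGraph.compl_adj, cycleGraph]
  tauto

theorem compl_not_adj_add_one (z : ZMod n) : ¬ (cycleGraph n)ᶜ.Adj z (z + 1) := by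
  simp [SimpleGraph.compl_adj, cycleGraph]

theorem compl_adj_of_sub_eq {u v : ZMod n} {d : ℕ} (hd : 2 ≤ d) (hdn : d + 1 < n)
    (h : u - v = d) : (cycleGraph n)ᶜ.Adj u v := by
  have cast_ne_zero : ∀ k : ℕ, 0 < k → k < n → (k : ZMod n) ≠ 0 := fun k hk hkn hk0 =>
    hk.ne' (Nat.eq_zero_of_dvd_of_lt ((ZMod.natCast_eq_zero_iff k n).1 hk0) hkn)
  refine compl_adj_iff.2 ⟨fun huv => ?_, fun h1 => ?_, fun h1 => ?_⟩
  · exact cast_ne_zero d (by omega) (by omega) (by rw [← h, huv, sub_self])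
  · refine cast_ne_zero (d - 1) (by omega) (by omega) ?_
    rw [Nat.cast_pred (by omega), ← h, h1, sub_self]
  · refine cast_ne_zero (d + 1) (by omega) hdn ?_
    rw [Nat.cast_succ, ← h, ← h1]
    ring

theorem compl_adj_add_three (hn : 6 ≤ n) {u v : ZMod n} (h : ¬ (cycleGraph n)ᶜ.Adj v u) :
    (cycleGraph n)ᶜ.Adj (v + 3) u := by
  simp only [compl_adj_iff, not_and_or, not_not] at h
  rcases h with rfl | h | h
  · exact compl_adj_of_sub_eq (d := 3) (by omega) (by omega) (by push_cast; ring)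
  · exact compl_adj_of_sub_eq (d := 4) (by omega) (by omega) (by push_cast; linear_combination h)
  · exact compl_adj_of_sub_eq (d := 2) (by omega) (by omega) (by push_cast; linear_combination -h)

end cycleGraph

theorem compl_cycle_pawful_not_join (n : ℕ) (hn : 6 ≤ n) :
    Pawful (cycleGraph n)ᶜ ∧
      ¬ ∃ A : Set (ZMod n), A.Nonempty ∧ Aᶜ.Nonempty ∧
        ∀ u v : ZMod n, u ∈ A → v ∈ Aᶜ → (cycleGraph n)ᶜ.Adj u v := by
  have : NeZero n := ⟨by omega⟩
  have hcommon : ∀ u v, u ≠ v → ¬ (cycleGraph n)ᶜ.Adj u v →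
      ∃ x, (cycleGraph n)ᶜ.Adj u x ∧ (cycleGraph n)ᶜ.Adj x v := fun u v _ huv =>
    ⟨v + 3, (cycleGraph.compl_adj_add_three hn fun h => huv h.symm).symm,
      cycleGraph.compl_adj_add_three hn (SimpleGraph.irrefl _)⟩
  refine ⟨⟨SimpleGraph.connected_of_exists_common_adj hcommon,
    SimpleGraph.dist_le_two_of_exists_common_adj hcommon, ?_⟩, ?_⟩
  · intro u v w huv hvw _
    have hu := SimpleGraph.not_adj_of_dist_eq_two huv
    have hw := SimpleGraph.not_adj_of_dist_eq_two hvw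
    simp only [SimpleGraph.dist_eq_one_iff_adj]
    exact ⟨v + 3, cycleGraph.compl_adj_add_three hn fun h => hu h.symm,
      cycleGraph.compl_adj_add_three hn (SimpleGraph.irrefl _),
      cycleGraph.compl_adj_add_three hn hw⟩
  · rintro ⟨A, ⟨a, ha⟩, ⟨b, hb⟩, hjoin⟩
    have hclosed : ∀ z ∈ A, z + 1 ∈ A := fun z hz => by_contra fun hz1 =>
      cycleGraph.compl_not_adj_add_one z (hjoin z _ hz hz1)
    exact hb (ZMod.eq_univ_of_add_one_mem ha hclosed ▸ Set.mem_univ b)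
end

section
/- Let G be a graph satisfying: for every four vertices x, y, z, w with d(x,y) + d(y,z) = d(x,z), d(y,z) + d(z,w) = d(y,w), and d(x,y) = d(y,z) = 1, one has d(x,w) = d(x,y) + d(y,z) + d(z,w). Then for every k ≥ 1 and every sequence of vertices x_0, …, x_k with d(x_i, x_{i+1}) = 1 for all i and d(x_i, x_{i+2}) = 2 for all i, we have d(x_0, x_k) = k. -/
theorem local_ptolemy_unit_chain {V : Type*} [Fintype V] (G : SimpleGraph V)
    (hconn : G.Connected)
    (hpto : ∀ x y z w : V, G.dist x y + G.dist y z = G.dist x z →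
      G.dist y z + G.dist z w = G.dist y w → G.dist x y = 1 → G.dist y z = 1 →
      G.dist x w = G.dist x y + G.dist y z + G.dist z w)
    (k : ℕ) (hk : 1 ≤ k) (x : ℕ → V)
    (h1 : ∀ i, i < k → G.dist (x i) (x (i + 1)) = 1)
    (h2 : ∀ i, i + 2 ≤ k → G.dist (x i) (x (i + 2)) = 2) :
    G.dist (x 0) (x k) = k := by
  have key : ∀ n, ∀ i, i + n ≤ k → G.dist (x i) (x (i + n)) = n := by
    intro n
    induction n using Nat.strong_induction_on with
    | _ n ih =>
      match n with
      | 0 => intro i _; simp [SimpleGraph.dist_self]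
      | 1 => intro i hi; exact h1 i (by omega)
      | 2 => intro i hi; exact h2 i hi
      | (m + 3) =>
        intro i hi
        have hyz : G.dist (x (i+1)) (x (i+2)) = 1 := h1 (i+1) (by omega)
        have hxy : G.dist (x i) (x (i+1)) = 1 := h1 i (by omega)
        have hxz : G.dist (x i) (x (i+2)) = 2 := h2 i (by omega)
        have hzw : G.dist (x (i+2)) (x (i + (m+3))) = m + 1 := by
          have := ih (m+1) (by omega) (i+2) (by omega)
          convert this using 3
          omega
        have hyw : G.dist (x (i+1)) (x (i + (m+3))) = m + 2 := by
          have := ih (m+2) (by omega) (i+1) (by omega)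
          convert this using 3
          omega
        have := hpto (x i) (x (i+1)) (x (i+2)) (x (i + (m+3)))
          (by rw [hxy, hyz, hxz]) (by rw [hyz, hzw, hyw]; omega) hxy hyz
        rw [this, hxy, hyz, hzw]
        omega
  have := key k 0 (by omega)
  simpa using this
end

section
/- A graph satisfying the local Ptolemy condition is chordal: if G is a connected graph such that for every four vertices x, y, z, w with d(x,y) = d(y,z) = 1, d(x,z) = 2, and d(y,z) + d(z,w) = d(y,w), one has d(x,w) = 2 + d(z,w), then G contains no induced cycle of length at least 4. -/
theorem local_ptolemy_chordal {V : Type*} [Fintype V] (G : SimpleGraph V)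
    (hconn : G.Connected)
    (hpto : ∀ x y z w : V, G.dist x y = 1 → G.dist y z = 1 → G.dist x z = 2 →
      G.dist y z + G.dist z w = G.dist y w → G.dist x w = 2 + G.dist z w) :
    ¬ ∃ (k : ℕ) (x : ZMod k → V), 4 ≤ k ∧ Function.Injective x ∧
      (∀ i j : ZMod k, G.Adj (x i) (x j) ↔ (j - i = 1 ∨ i - j = 1)) := by
  rintro ⟨k, x, hk, hinj, hadj⟩
  haveI : NeZero k := ⟨by omega⟩
  -- cast injectivity on [0, k)
  have hc : ∀ a b : ℕ, a < k → b < k → (a : ZMod k) = b → a = b := by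
    intro a b ha hb h
    have := congrArg ZMod.val h
    rwa [ZMod.val_cast_of_lt ha, ZMod.val_cast_of_lt hb] at this
  have h1ne : (1 : ZMod k) ≠ 0 := by
    intro h
    have : (1 : ℕ) = 0 := hc 1 0 (by omega) (by omega) (by push_cast; exact h)
    omega
  have h2ne : (2 : ZMod k) ≠ 0 := by
    intro h
    have : (2 : ℕ) = 0 := hc 2 0 (by omega) (by omega) (by push_cast; exact h)
    omega
  have h3ne : (3 : ZMod k) ≠ 0 := by
    intro h
    have : (3 : ℕ) = 0 := hc 3 0 (by omega) (by omega) (by push_cast; exact h)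
    omega
  -- distance helpers
  have hA : ∀ u v : V, G.Adj u v → G.dist u v = 1 := by
    intro u v h
    exact SimpleGraph.dist_eq_one_iff_adj.2 h
  have h2d : ∀ u t v : V, u ≠ v → ¬ G.Adj u v → G.Adj u t → G.Adj t v →
      G.dist u v = 2 := by
    intro u t v hne hnadj hut htv
    have hle : G.dist u v ≤ 2 := by
      calc G.dist u v ≤ G.dist u t + G.dist t v := hconn.dist_triangle
        _ = 2 := by rw [hA u t hut, hA t v htv]
    have h1 : G.dist u v ≠ 1 := fun h => hnadj (SimpleGraph.dist_eq_one_iff_adj.1 h)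
    have hpos : 0 < G.dist u v := hconn.pos_dist_of_ne hne
    omega
  -- consecutive vertices are adjacent
  have hadj1 : ∀ a : ZMod k, G.Adj (x a) (x (a + 1)) := by
    intro a
    exact (hadj a (a + 1)).2 (Or.inl (by ring))
  -- vertices two apart: distance 2
  have hdist2 : ∀ a : ZMod k, G.dist (x a) (x (a + 2)) = 2 := by
    intro a
    have hne : x a ≠ x (a + 2) := by
      intro h
      have := hinj h
      have : (2 : ZMod k) = 0 := by linear_combination -this
      exact h2ne this
    have hnadj : ¬ G.Adj (x a) (x (a + 2)) := by
      rw [hadj]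
      rintro (h | h)
      · exact h1ne (by linear_combination h - 1 * (by ring : (a + 2 : ZMod k) - a = 2))
      · exact h3ne (by linear_combination -h - (by ring : a - (a + 2) = -2))
    have h12 : G.Adj (x (a + 1)) (x (a + 2)) := by
      have := hadj1 (a + 1)
      rwa [show (a + 1 + 1 : ZMod k) = a + 2 by ring] at this
    exact h2d (x a) (x (a + 1)) (x (a + 2)) hne hnadj (hadj1 a) h12
  -- key induction: dist (x j) (x (-1)) = j + 1 for j ≤ k - 2
  have key : ∀ j : ℕ, j ≤ k - 2 → G.dist (x (j : ZMod k)) (x (-1)) = j + 1 := by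
    intro j
    induction j using Nat.twoStepInduction with
    | zero =>
      intro _
      push_cast
      apply hA
      exact (hadj 0 (-1)).2 (Or.inr (by ring))
    | one =>
      intro _
      push_cast
      have hm1 : (-1 : ZMod k) = 1 + (-2) := by ring
      have hne : x 1 ≠ x (-1) := by
        intro h
        have := hinj h
        exact h2ne (by linear_combination this)
      have hnadj : ¬ G.Adj (x 1) (x (-1)) := by
        rw [hadj]
        rintro (h | h)
        · exact h3ne (by linear_combination -h)
        · exact h1ne (by linear_combination h)
      have hA2 : G.Adj (x 0) (x (-1)) := (hadj 0 (-1)).2 (Or.inr (by ring))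
      have hA1 : G.Adj (x 1) (x 0) := ((hadj 0 1).2 (Or.inl (by ring))).symm
      exact h2d (x 1) (x 0) (x (-1)) hne hnadj hA1 hA2
    | more j ih1 ih2 =>
      intro hj
      have hj1 : j + 1 ≤ k - 2 := by omega
      have hj0 : j ≤ k - 2 := by omega
      have d1 : G.dist (x ((j : ZMod k) + 2)) (x ((j : ZMod k) + 1)) = 1 := by
        apply hA
        exact (hadj ((j : ZMod k) + 2) ((j : ZMod k) + 1)).2 (Or.inr (by ring))
      have d2 : G.dist (x ((j : ZMod k) + 1)) (x (j : ZMod k)) = 1 := by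
        apply hA
        exact (hadj ((j : ZMod k) + 1) (j : ZMod k)).2 (Or.inr (by ring))
      have d3 : G.dist (x ((j : ZMod k) + 2)) (x (j : ZMod k)) = 2 := by
        have := hdist2 (j : ZMod k)
        rw [SimpleGraph.dist_comm] at this
        exact this
      have hw1 : G.dist (x (j : ZMod k)) (x (-1)) = j + 1 := ih1 hj0
      have hw2 : G.dist (x ((j : ZMod k) + 1)) (x (-1)) = j + 2 := by
        have h := ih2 hj1
        rw [show ((j + 1 : ℕ) : ZMod k) = (j : ZMod k) + 1 by push_cast; ring] at h
        omega
      have hcond : G.dist (x ((j : ZMod k) + 1)) (x (j : ZMod k)) +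
          G.dist (x (j : ZMod k)) (x (-1)) = G.dist (x ((j : ZMod k) + 1)) (x (-1)) := by
        rw [d2, hw1, hw2]
        omega
      have := hpto (x ((j : ZMod k) + 2)) (x ((j : ZMod k) + 1)) (x (j : ZMod k)) (x (-1))
        d1 d2 d3 hcond
      rw [hw1] at this
      rw [show ((j + 2 : ℕ) : ZMod k) = (j : ZMod k) + 2 by push_cast; ring, this]
      omega
  -- apply at j = k - 2
  have hfin := key (k - 2) (le_refl _)
  have hcast : ((k - 2 : ℕ) : ZMod k) = -2 := by
    have : ((k - 2 : ℕ) : ZMod k) = (k : ZMod k) - 2 := by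
      push_cast [Nat.cast_sub (by omega : 2 ≤ k)]
      ring
    rw [this, ZMod.natCast_self]
    ring
  rw [hcast] at hfin
  have hadjfin : G.Adj (x (-2)) (x (-1)) := (hadj (-2) (-1)).2 (Or.inl (by ring))
  have := hA _ _ hadjfin
  rw [this] at hfin
  omega
end

section
/- A graph satisfying the local Ptolemy condition is distance-hereditary: if G is a connected graph such that for every four vertices x, y, z, w with d(x,y) = d(y,z) = 1, d(x,z) = 2, and d(y,z) + d(z,w) = d(y,w), one has d(x,w) = 2 + d(z,w), then every induced path in G is a shortest path. -/
theorem local_ptolemy_distance_hereditary {V : Type*} [Fintype V] (G : SimpleGraph V)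
    (hconn : G.Connected)
    (hpto : ∀ x y z w : V, G.dist x y = 1 → G.dist y z = 1 → G.dist x z = 2 →
      G.dist y z + G.dist z w = G.dist y w → G.dist x w = 2 + G.dist z w)
    (k : ℕ) (x : ℕ → V)
    (hinj : ∀ i j, i ≤ k → j ≤ k → x i = x j → i = j)
    (hind : ∀ i j, i ≤ k → j ≤ k → (G.Adj (x i) (x j) ↔ (i = j + 1 ∨ j = i + 1))) :
    G.dist (x 0) (x k) = k := by
  induction k using Nat.strong_induction_on generalizing x with
  | _ k ih =>
    match k with
    | 0 => simp
    | 1 =>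
      exact SimpleGraph.dist_eq_one_iff_adj.mpr
        ((hind 0 1 (by omega) (by omega)).mpr (by omega))
    | (k+2) =>
      have h01 : G.dist (x 0) (x 1) = 1 :=
        SimpleGraph.dist_eq_one_iff_adj.mpr ((hind 0 1 (by omega) (by omega)).mpr (by omega))
      have h12 : G.dist (x 1) (x 2) = 1 :=
        SimpleGraph.dist_eq_one_iff_adj.mpr ((hind 1 2 (by omega) (by omega)).mpr (by omega))
      have h02 : G.dist (x 0) (x 2) = 2 := by
        have hle : G.dist (x 0) (x 2) ≤ 2 := by
          calc G.dist (x 0) (x 2) ≤ G.dist (x 0) (x 1) + G.dist (x 1) (x 2) :=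
              hconn.dist_triangle
            _ = 2 := by omega
        have hne : x 0 ≠ x 2 := fun h => by simpa using hinj 0 2 (by omega) (by omega) h
        have h0 : G.dist (x 0) (x 2) ≠ 0 := fun h => hne (hconn.dist_eq_zero_iff.mp h)
        have h1 : G.dist (x 0) (x 2) ≠ 1 := fun h => by
          have := SimpleGraph.dist_eq_one_iff_adj.mp h
          have := (hind 0 2 (by omega) (by omega)).mp this
          omega
        omega
      have h1k : G.dist (x 1) (x (k+2)) = k+1 := by
        have := ih (k+1) (by omega) (fun i => x (i+1))
          (fun i j hi hj h => by
            have := hinj (i+1) (j+1) (by omega) (by omega) h; omega)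
          (fun i j hi hj => by
            have := hind (i+1) (j+1) (by omega) (by omega)
            rw [this]; omega)
        simpa using this
      have h2k : G.dist (x 2) (x (k+2)) = k := by
        have := ih k (by omega) (fun i => x (i+2))
          (fun i j hi hj h => by
            have := hinj (i+2) (j+2) (by omega) (by omega) h; omega)
          (fun i j hi hj => by
            have := hind (i+2) (j+2) (by omega) (by omega)
            rw [this]; omega)
        simpa using this
      have := hpto (x 0) (x 1) (x 2) (x (k+2)) h01 h12 h02 (by omega)
      omega
end

section
/- If G is ptolemaic (satisfies Ptolemy's inequality d(x,y)·d(z,w) + d(y,z)·d(x,w) ≥ d(x,z)·d(y,w) for all four vertices), then for every four vertices x, y, z, w with y ≠ z, d(x,y) + d(y,z) = d(x,z), and d(y,z) + d(z,w) = d(y,w), we have d(x,w) = d(x,y) + d(y,z) + d(z,w). -/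
theorem ptolemaic_dist_concat {V : Type*} [Fintype V] (G : SimpleGraph V)
    (hconn : G.Connected)
    (hpto : ∀ x y z w : V,
      G.dist x z * G.dist y w ≤ G.dist x y * G.dist z w + G.dist y z * G.dist x w)
    (x y z w : V) (hyz : y ≠ z)
    (h1 : G.dist x y + G.dist y z = G.dist x z)
    (h2 : G.dist y z + G.dist z w = G.dist y w) :
    G.dist x w = G.dist x y + G.dist y z + G.dist z w := by
  have hb : 0 < G.dist y z := by
    apply Nat.pos_of_ne_zero
    intro h
    rw [SimpleGraph.dist_eq_zero_iff_eq_or_not_reachable] at h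
    rcases h with h | h
    · exact hyz h
    · exact h (hconn.preconnected y z)
  have hle : G.dist x w ≤ G.dist x y + G.dist y z + G.dist z w := by
    calc G.dist x w ≤ G.dist x y + G.dist y w := hconn.dist_triangle
    _ = G.dist x y + G.dist y z + G.dist z w := by rw [← h2]; ring
  have hp := hpto x y z w
  rw [← h1, ← h2] at hp
  nlinarith [hp, hb, hle]
end

section
/- Let G be a geodetic graph (there is a unique shortest path between any two vertices), let σ(u,v) denote the unique vertex w with d(u,w) = 1 and d(u,v) = 1 + d(w,v) for d(u,v) ≥ 2, and suppose G is ptolemaic. Then for vertices a, b, c with d(a,b) ≥ 1, d(b,c) ≥ 2, b = σ(a, σ(b,c)) and d(a,b)+d(b,σ(b,c)) = d(a,σ(b,c)), we have b = σ(a,c). -/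
theorem geodetic_ptolemaic_sigma {V : Type*} [Fintype V] (G : SimpleGraph V)
    (hconn : G.Connected)
    (hgeo : ∀ u v : V, ∃! p : G.Walk u v, p.IsPath ∧ p.length = G.dist u v)
    (hpto : ∀ x y z w : V,
      G.dist x z * G.dist y w ≤ G.dist x y * G.dist z w + G.dist y z * G.dist x w)
    (σ : V → V → V)
    (hσ : ∀ u v : V, 2 ≤ G.dist u v →
      G.dist u (σ u v) = 1 ∧ G.dist u v = 1 + G.dist (σ u v) v)
    (a b c : V) (hab : 1 ≤ G.dist a b) (hbc : 2 ≤ G.dist b c)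
    (hb : b = σ a (σ b c))
    (hsum : G.dist a b + G.dist b (σ b c) = G.dist a (σ b c)) :
    b = σ a c := by
  set m := σ b c with hm
  obtain ⟨hbm1, hbcm⟩ := hσ b c hbc
  rw [← hm] at hbm1 hbcm
  -- d(a,m) ≥ 2
  have ham2 : 2 ≤ G.dist a m := by omega
  obtain ⟨hab1', ham'⟩ := hσ a m ham2
  rw [← hb] at hab1' ham'
  -- d(a,b) = 1
  have hab1 : G.dist a b = 1 := hab1'
  have ham : G.dist a m = 2 := by omega
  -- Ptolemy: d(a,m)*d(b,c) ≤ d(a,b)*d(m,c) + d(b,m)*d(a,c)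
  have hp := hpto a b m c
  rw [ham, hbm1, hab1] at hp
  -- triangle
  have htri := hconn.dist_triangle (u := a) (v := b) (w := c)
  have hac : G.dist a c = 1 + G.dist b c := by omega
  have hac2 : 2 ≤ G.dist a c := by omega
  set s := σ a c with hs
  obtain ⟨has1, hasc⟩ := hσ a c hac2
  rw [← hs] at has1 hasc
  have hsc : G.dist s c = G.dist b c := by omega
  -- build two shortest walks from a to c
  obtain ⟨pb, ⟨hpbP, hpbL⟩, _⟩ := hgeo b c
  obtain ⟨ps, ⟨hpsP, hpsL⟩, _⟩ := hgeo s c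
  have hadjb : G.Adj a b := SimpleGraph.dist_eq_one_iff_adj.mp hab1
  have hadjs : G.Adj a s := SimpleGraph.dist_eq_one_iff_adj.mp has1
  set wb : G.Walk a c := SimpleGraph.Walk.cons hadjb pb with hwb
  set ws : G.Walk a c := SimpleGraph.Walk.cons hadjs ps with hws
  have hwbL : wb.length = G.dist a c := by
    simp [hwb, SimpleGraph.Walk.length_cons, hpbL]; omega
  have hwsL : ws.length = G.dist a c := by
    simp [hws, SimpleGraph.Walk.length_cons, hpsL]; omega
  obtain ⟨q, _, hq⟩ := hgeo a c
  have h1 : wb = q := hq wb ⟨wb.isPath_of_length_eq_dist hwbL, hwbL⟩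
  have h2 : ws = q := hq ws ⟨ws.isPath_of_length_eq_dist hwsL, hwsL⟩
  have := congrArg (fun w => SimpleGraph.Walk.getVert w 1) (h1.trans h2.symm)
  simpa [hwb, hws] using this
end

section
/- Let m ≥ 3 and define T : ℤ × ℤ → ℤ by T(k,l) = 0 if k < 0 or l < 0, T(0,0) = 2m, T(1,1) = 4m, and T(k,l) = max{T(k−1, l−1), T(k−2, l−m)} for all other (k,l). Then T(k,l) = 0 unless l − k is a nonnegative multiple of m − 2, and T(k,k) = 4m for all k ≥ 1. -/
/-!
Both steps of the recursion, `(k, l) ↦ (k - 1, l - 1)` and `(k, l) ↦ (k - 2, l - m)`, lower `l - k`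
by `0` or by `m - 2`, and the seeds `(0, 0)` and `(1, 1)` have `l - k = 0`. So by strong induction
on `k` the recursion only produces nonzero values where `l - k ∈ (m - 2)ℕ`. On the diagonal the second
step lands at `l - k = 2 - m < 0`, where `T` vanishes, so `T k k = max (T (k - 1) (k - 1)) 0`
propagates the nonnegative value `T 1 1`.
-/

def OnRankLattice (m k l : ℤ) : Prop := ∃ j : ℕ, l - k = j * (m - 2)

namespace OnRankLattice

variable {m k l : ℤ}

theorem self (m k : ℤ) : OnRankLattice m k k := ⟨0, by simp⟩

theorem of_sub_one (h : OnRankLattice m (k - 1) (l - 1)) : OnRankLattice m k l := by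
  obtain ⟨j, hj⟩ := h
  exact ⟨j, by linarith⟩

theorem of_sub_two_sub (h : OnRankLattice m (k - 2) (l - m)) : OnRankLattice m k l := by
  obtain ⟨j, hj⟩ := h
  exact ⟨j + 1, by push_cast; linarith⟩

theorem not_sub_two_sub_self (hm : 2 < m) (k : ℤ) : ¬ OnRankLattice m (k - 2) (k - m) := by
  rintro ⟨j, hj⟩
  nlinarith [Int.natCast_nonneg j]

end OnRankLattice

section Recursion

variable {m : ℤ} {T : ℤ → ℤ → ℤ}

theorem eq_zero_of_not_onRankLattice (hneg : ∀ k l : ℤ, (k < 0 ∨ l < 0) → T k l = 0)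
    (hrec : ∀ k l : ℤ, 0 ≤ k → 0 ≤ l → ¬(k = 0 ∧ l = 0) → ¬(k = 1 ∧ l = 1) →
      T k l = max (T (k - 1) (l - 1)) (T (k - 2) (l - m)))
    (k l : ℤ) (hkl : ¬ OnRankLattice m k l) : T k l = 0 := by
  induction k using Int.strongRec (m := 0) generalizing l with
  | lt k hk => exact hneg k l (Or.inl hk)
  | ge k hk ih =>
    rcases lt_or_ge l 0 with hl | hl
    · exact hneg k l (Or.inr hl)
    have h00 : ¬(k = 0 ∧ l = 0) := by
      rintro ⟨rfl, rfl⟩; exact hkl (.self m 0)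
    have h11 : ¬(k = 1 ∧ l = 1) := by
      rintro ⟨rfl, rfl⟩; exact hkl (.self m 1)
    rw [hrec k l hk hl h00 h11,
      ih (k - 1) (by omega) (l - 1) (mt OnRankLattice.of_sub_one hkl),
      ih (k - 2) (by omega) (l - m) (mt OnRankLattice.of_sub_two_sub hkl), max_self]

theorem diag_eq_of_one_le (hm : 2 < m) (hneg : ∀ k l : ℤ, (k < 0 ∨ l < 0) → T k l = 0)
    (hrec : ∀ k l : ℤ, 0 ≤ k → 0 ≤ l → ¬(k = 0 ∧ l = 0) → ¬(k = 1 ∧ l = 1) →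
      T k l = max (T (k - 1) (l - 1)) (T (k - 2) (l - m)))
    (h11 : 0 ≤ T 1 1) (k : ℤ) (hk : 1 ≤ k) : T k k = T 1 1 := by
  induction k, hk using Int.leInduction with
  | base => rfl
  | succ k hk ih =>
    have hfar : T (k + 1 - 2) (k + 1 - m) = 0 :=
      eq_zero_of_not_onRankLattice hneg hrec _ _ (OnRankLattice.not_sub_two_sub_self hm _)
    rw [hrec (k + 1) (k + 1) (by omega) (by omega) (by omega) (by omega), add_sub_cancel_right,
      hfar, ih, max_eq_left h11]

end Recursion

theorem evenCycle_rank_function_general (m : ℤ) (hm : 3 ≤ m) (T : ℤ → ℤ → ℤ)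
    (hneg : ∀ k l : ℤ, (k < 0 ∨ l < 0) → T k l = 0)
    (h11 : T 1 1 = 4 * m)
    (hrec : ∀ k l : ℤ, 0 ≤ k → 0 ≤ l → ¬(k = 0 ∧ l = 0) → ¬(k = 1 ∧ l = 1) →
      T k l = max (T (k - 1) (l - 1)) (T (k - 2) (l - m))) :
    (∀ k l : ℤ, (¬ ∃ j : ℕ, l - k = (j : ℤ) * (m - 2)) → T k l = 0) ∧
      (∀ k : ℤ, 1 ≤ k → T k k = 4 * m) := by
  refine ⟨eq_zero_of_not_onRankLattice hneg hrec, fun k hk => ?_⟩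
  rw [diag_eq_of_one_le (by omega) hneg hrec (by omega) k hk, h11]

theorem evenCycle_rank_function (m : ℤ) (hm : 3 ≤ m) (T : ℤ → ℤ → ℤ)
    (hneg : ∀ k l : ℤ, (k < 0 ∨ l < 0) → T k l = 0)
    (h00 : T 0 0 = 2 * m) (h11 : T 1 1 = 4 * m)
    (hrec : ∀ k l : ℤ, 0 ≤ k → 0 ≤ l → ¬(k = 0 ∧ l = 0) → ¬(k = 1 ∧ l = 1) →
      T k l = max (T (k - 1) (l - 1)) (T (k - 2) (l - m))) :
    (∀ k l : ℤ, (¬ ∃ j : ℕ, l - k = (j : ℤ) * (m - 2)) → T k l = 0) ∧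
      (∀ k : ℤ, 1 ≤ k → T k k = 4 * m) :=
  evenCycle_rank_function_general m hm T hneg h11 hrec
end
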